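/- Let n ≥ 2 and 1 ≤ p ≤ n. For every integer m with 0 ≤ m ≤ 2p−2 there exists a polynomial P ∈ ℚ[x] of degree at most p such that for every integer ℓ with 0 ≤ ℓ ≤ n, the coefficient of zᵐ in Ã_p^{(ℓ)}(z) equals P(ℓ). Moreover, the coefficient of zᵐ in Ã_p^{(ℓ)}(z) is 0 for every m > 2p−2, i.e. Ã_p^{(ℓ)}(z) has degree at most 2p−2 (so that A_p^{(ℓ)}(z) = z^{−p} Ã_p^{(ℓ)}(z) is a Laurent polynomial with exponents between −p and p−2). (This is Remark 3.3 of the paper.) -/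

import Mathlib

noncomputable section

open Finset PowerSeries

/-- Binomial coefficient `binom b a` with integer arguments,
zero when `a < 0` or `b < a`. -/
def ibinom (b a : ℤ) : ℤ := if a < 0 ∨ b < a then 0 else (b.toNat.choose a.toNat : ℤ)

/-- One-norm `‖μ‖` of an integer vector. -/
def onenorm {n : ℕ} (μ : Fin n → ℤ) : ℕ := ∑ i, (μ i).natAbs

/-- `Z(μ)`: number of zero coordinates. -/
def zcount {n : ℕ} (μ : Fin n → ℤ) : ℕ := (univ.filter fun i => μ i = 0).card

/-- `N_𝓛(k, ℓ)`. -/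
def Ncard {n : ℕ} (L : Set (Fin n → ℤ)) (k ℓ : ℕ) : ℕ :=
  {μ : Fin n → ℤ | μ ∈ L ∧ onenorm μ = k ∧ zcount μ = ℓ}.ncard

/-- `N_𝓛(k)`. -/
def NcardTot {n : ℕ} (L : Set (Fin n → ℤ)) (k : ℕ) : ℕ :=
  {μ : Fin n → ℤ | μ ∈ L ∧ onenorm μ = k}.ncard

/-- `ϑ_𝓛^{(ℓ)}(z) = Σ_{k≥0} N_𝓛(k,ℓ) z^k`. -/
def thetaL {n : ℕ} (L : Set (Fin n → ℤ)) (ℓ : ℕ) : PowerSeries ℤ :=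
  PowerSeries.mk fun k => (Ncard L k ℓ : ℤ)

/-- `ϑ_𝓛(z) = Σ_{k≥0} N_𝓛(k) z^k`. -/
def thetaTot {n : ℕ} (L : Set (Fin n → ℤ)) : PowerSeries ℤ :=
  PowerSeries.mk fun k => (NcardTot L k : ℤ)

/-- `N_𝓛^red(k,ℓ)`, counting elements of `C(q) ∩ 𝓛`. -/
def NcardRed {n : ℕ} (L : Set (Fin n → ℤ)) (q k ℓ : ℕ) : ℕ :=
  {μ : Fin n → ℤ | (∀ i, |μ i| < (q : ℤ)) ∧ μ ∈ L ∧ onenorm μ = k ∧ zcount μ = ℓ}.ncard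

/-- `Φ_𝓛^{(ℓ)}(z) = Σ_{k≥0} N_𝓛^red(k,ℓ) z^k`. -/
def PhiL {n : ℕ} (L : Set (Fin n → ℤ)) (q ℓ : ℕ) : PowerSeries ℤ :=
  PowerSeries.mk fun k => (NcardRed L q k ℓ : ℤ)

/-- `𝓛` is `q`-periodic: `μ ∈ 𝓛 ↔ μ + qν ∈ 𝓛`. -/
def qPeriodic {n : ℕ} (q : ℕ) (L : Set (Fin n → ℤ)) : Prop :=
  ∀ μ ν : Fin n → ℤ, μ ∈ L ↔ (μ + (q : ℤ) • ν) ∈ L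

/-- `M_𝓛(k,p)`. -/
def Mcoef {n : ℕ} (L : Set (Fin n → ℤ)) (k p : ℕ) : ℤ :=
  ∑ ℓ ∈ range (n+1), ∑ r ∈ range ((k-1+p)/2 + 1),
    (Ncard L (k-1+p-2*r) ℓ : ℤ) *
    ∑ j ∈ Icc 1 p, (-1 : ℤ)^(j-1) *
      ∑ t ∈ range ((p-j)/2 + 1), ibinom ((n : ℤ) - p + j + 2*t) t *
        ∑ β ∈ range (p-j-2*t+1),
          2^(p-j-2*t-β) * ibinom ((n : ℤ) - ℓ) β * ibinom (ℓ : ℤ) ((p-j-2*t-β : ℕ)) *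
          ∑ α ∈ range (β+1), ibinom (β : ℤ) α *
            ∑ i ∈ range j, ibinom ((r : ℤ) - i - p + j + α + t + n - 2) ((n : ℤ) - 2)

/-- `Ã_p^{(ℓ)}(z) = z^p A_p^{(ℓ)}(z)`. -/
def Atilde (n p ℓ : ℕ) : PowerSeries ℤ :=
  ∑ j ∈ Icc 1 p, C ((-1 : ℤ)^(j-1)) *
    ∑ t ∈ range ((p-j)/2 + 1), C (ibinom ((n : ℤ) - p + j + 2*t) t) *
      ∑ β ∈ range (p-j-2*t+1),
        C (2^(p-j-2*t-β) * ibinom ((n : ℤ) - ℓ) β * ibinom (ℓ : ℤ) ((p-j-2*t-β : ℕ))) *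
        ∑ α ∈ range (β+1), C (ibinom (β : ℤ) α) *
          ∑ i ∈ range j, (X : PowerSeries ℤ)^(2*p - 2*(j+t+α-i))

/-- `Υ_m^{(ℓ)}(z)`; zero when `m < 0`. -/
def Upsilon {n : ℕ} (L : Set (Fin n → ℤ)) (m : ℤ) (ℓ : ℕ) : PowerSeries ℤ :=
  if m < 0 then 0 else
    ∑ h ∈ range (m.toNat + 1),
      C (∑ s ∈ range (h/2 + 1), (Ncard L (h - 2*s) ℓ : ℤ) * ((s + n - 2).choose (n-2) : ℤ)) *
        (X : PowerSeries ℤ)^h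

/-- `B̃_{𝓛,p}^{(ℓ)}(z) = z^p B_{𝓛,p}^{(ℓ)}(z)`. -/
def Btilde {n : ℕ} (L : Set (Fin n → ℤ)) (p ℓ : ℕ) : PowerSeries ℤ :=
  ∑ j ∈ Icc 1 p, C ((-1 : ℤ)^(j-1)) *
    ∑ t ∈ range ((p-j)/2 + 1), C (ibinom ((n : ℤ) - p + j + 2*t) t) *
      ∑ β ∈ range (p-j-2*t+1),
        C (2^(p-j-2*t-β) * ibinom ((n : ℤ) - ℓ) β * ibinom (ℓ : ℤ) ((p-j-2*t-β : ℕ))) *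
        ∑ α ∈ range (β+1), C (ibinom (β : ℤ) α) *
          ∑ i ∈ range j,
            (X : PowerSeries ℤ)^(2*p - 2*(j+t+α-i)) *
              Upsilon L (2*((j : ℤ) + t + α - i) - p - 1) ℓ

/-- `C_{p,g}^{(ℓ)}`. -/
def Cpg (n p g ℓ : ℕ) : ℤ :=
  ∑ j ∈ Icc 1 p, (-1 : ℤ)^(j-1) *
    ∑ t ∈ range ((p-j)/2 + 1), ibinom ((n : ℤ) - p + j + 2*t) t *
      ∑ β ∈ range (p-j-2*t+1),
        2^(p-j-2*t-β) * ibinom ((n : ℤ) - ℓ) β * ibinom (ℓ : ℤ) ((p-j-2*t-β : ℕ)) *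
        ∑ i ∈ range j, ibinom (β : ℤ) ((p : ℤ) + i - j - t - g)

/-! In the coefficient of `z^m` of `Ã_p^{(ℓ)}`, `ℓ` enters only through
`binom(n-ℓ, β) · binom(ℓ, p-j-2t-β)`, a product of polynomials in `ℓ` of total degree
`p-j-2t ≤ p`. Every exponent `2p - 2(j+t+α-i)` is at most `2p - 2` because `i < j`. -/

lemma ibinom_natCast (b a : ℕ) : ibinom b a = (b.choose a : ℤ) := by
  unfold ibinom
  split_ifs with h
  · rcases h with h | h
    · omega
    · rw [Nat.choose_eq_zero_of_lt (by exact_mod_cast h), Nat.cast_zero]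
  · simp

lemma ibinom_natCast_sub {n ℓ : ℕ} (hℓ : ℓ ≤ n) (a : ℕ) :
    ibinom ((n : ℤ) - ℓ) a = ((n - ℓ).choose a : ℤ) := by
  rw [← Nat.cast_sub hℓ, ibinom_natCast]

lemma coeff_Atilde (n p ℓ m : ℕ) :
    coeff m (Atilde n p ℓ) =
    ∑ j ∈ Icc 1 p, (-1 : ℤ)^(j-1) *
      ∑ t ∈ range ((p-j)/2 + 1), ibinom ((n : ℤ) - p + j + 2*t) t *
        ∑ β ∈ range (p-j-2*t+1),
          (2^(p-j-2*t-β) * ibinom ((n : ℤ) - ℓ) β * ibinom (ℓ : ℤ) ((p-j-2*t-β : ℕ))) *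
          ∑ α ∈ range (β+1), ibinom (β : ℤ) α *
            ∑ i ∈ range j, if m = 2*p - 2*(j+t+α-i) then 1 else 0 := by
  simp only [Atilde, map_sum, coeff_C_mul, coeff_X_pow]

def AgreesWithPolyOn (S : Set ℕ) (d : ℕ) (f : ℕ → ℚ) : Prop :=
  ∃ P : Polynomial ℚ, P.natDegree ≤ d ∧ ∀ ℓ ∈ S, f ℓ = P.eval (ℓ : ℚ)

namespace AgreesWithPolyOn

variable {S : Set ℕ} {d e : ℕ} {f g : ℕ → ℚ}

lemma congr (h : AgreesWithPolyOn S d f) (hfg : ∀ ℓ ∈ S, f ℓ = g ℓ) :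
    AgreesWithPolyOn S d g := by
  obtain ⟨P, hP, hf⟩ := h
  exact ⟨P, hP, fun ℓ hℓ => (hfg ℓ hℓ).symm.trans (hf ℓ hℓ)⟩

lemma mono (h : AgreesWithPolyOn S d f) (hde : d ≤ e) : AgreesWithPolyOn S e f := by
  obtain ⟨P, hP, hf⟩ := h
  exact ⟨P, hP.trans hde, hf⟩

lemma const (c : ℚ) : AgreesWithPolyOn S 0 fun _ => c :=
  ⟨Polynomial.C c, by simp, fun _ _ => by simp⟩

lemma mul (hf : AgreesWithPolyOn S d f) (hg : AgreesWithPolyOn S e g) :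
    AgreesWithPolyOn S (d + e) (f * g) := by
  obtain ⟨P, hP, hf⟩ := hf
  obtain ⟨Q, hQ, hg⟩ := hg
  exact ⟨P * Q, Polynomial.natDegree_mul_le_of_le hP hQ,
    fun ℓ hℓ => by rw [Pi.mul_apply, hf ℓ hℓ, hg ℓ hℓ, Polynomial.eval_mul]⟩

lemma const_mul (c : ℚ) (h : AgreesWithPolyOn S d f) :
    AgreesWithPolyOn S d fun ℓ => c * f ℓ := by
  have hcf := (const (S := S) c).mul h
  rwa [zero_add] at hcf

lemma sum {ι : Type*} (s : Finset ι) {F : ι → ℕ → ℚ}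
    (h : ∀ i ∈ s, AgreesWithPolyOn S d (F i)) :
    AgreesWithPolyOn S d fun ℓ => ∑ i ∈ s, F i ℓ := by
  choose P hP hF using h
  refine ⟨∑ i ∈ s.attach, P i i.2,
    Polynomial.natDegree_sum_le_of_forall_le _ _ fun i _ => hP i i.2, fun ℓ hℓ => ?_⟩
  show ∑ i ∈ s, F i ℓ = _
  rw [Polynomial.eval_finsetSum, ← s.sum_attach]
  exact Finset.sum_congr rfl fun i _ => hF i i.2 ℓ hℓ

lemma choose (b : ℕ) : AgreesWithPolyOn S b fun ℓ => (ℓ.choose b : ℚ) := by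
  refine ⟨Polynomial.C ((b.factorial : ℚ)⁻¹) * descPochhammer ℚ b, ?_, fun ℓ _ => ?_⟩
  · exact (Polynomial.natDegree_C_mul_le _ _).trans (descPochhammer_natDegree ℚ b).le
  · show (ℓ.choose b : ℚ) = _
    rw [Nat.cast_choose_eq_descPochhammer_div, Polynomial.eval_mul, Polynomial.eval_C,
      div_eq_inv_mul]

lemma choose_sub (n b : ℕ) :
    AgreesWithPolyOn (Set.Iic n) b fun ℓ => ((n - ℓ).choose b : ℚ) := by
  obtain ⟨P, hP, hf⟩ := choose (S := Set.univ) b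
  refine ⟨P.comp (Polynomial.C (n : ℚ) - Polynomial.X), ?_, fun ℓ hℓ => ?_⟩
  · refine Polynomial.natDegree_comp_le.trans ?_
    have hlin : (Polynomial.C (n : ℚ) - Polynomial.X).natDegree ≤ 1 :=
      (Polynomial.natDegree_sub_le _ _).trans (by simp)
    simpa using Nat.mul_le_mul hP hlin
  · rw [hf _ (Set.mem_univ _), Polynomial.eval_comp, Polynomial.eval_sub, Polynomial.eval_C,
      Polynomial.eval_X, Nat.cast_sub (Set.mem_Iic.mp hℓ)]

end AgreesWithPolyOn

lemma cast_coeff_Atilde {n ℓ : ℕ} (hℓ : ℓ ≤ n) (p m : ℕ) :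
    ((coeff m (Atilde n p ℓ) : ℤ) : ℚ) =
    ∑ j ∈ Icc 1 p, (-1 : ℚ)^(j-1) *
      ∑ t ∈ range ((p-j)/2 + 1), ((ibinom ((n : ℤ) - p + j + 2*t) t : ℤ) : ℚ) *
        ∑ β ∈ range (p-j-2*t+1),
          2^(p-j-2*t-β) * ((n - ℓ).choose β : ℚ) * (ℓ.choose (p-j-2*t-β) : ℚ) *
          ∑ α ∈ range (β+1), (β.choose α : ℚ) *
            ∑ i ∈ range j, if m = 2*p - 2*(j+t+α-i) then 1 else 0 := by
  simp only [coeff_Atilde, ibinom_natCast_sub hℓ]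
  push_cast [ibinom_natCast, apply_ite]
  rfl

lemma agreesWithPolyOn_coeff_Atilde (n p m : ℕ) :
    AgreesWithPolyOn (Set.Iic n) p fun ℓ => ((coeff m (Atilde n p ℓ) : ℤ) : ℚ) := by
  open AgreesWithPolyOn in
  refine .congr (.sum _ fun j _ => .const_mul _ <| .sum _ fun t _ => .const_mul _ <|
    .sum _ fun β hβ => (((const _).mul (choose_sub n β)).mul (choose _)).mul
      (const _) |>.mono ?_) fun ℓ hℓ => (cast_coeff_Atilde hℓ p m).symm
  have := Finset.mem_range.mp hβ
  omega

lemma coeff_Atilde_eq_zero {n p m : ℕ} (hm : 2*p - 2 < m) (ℓ : ℕ) :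
    coeff m (Atilde n p ℓ) = 0 := by
  rw [coeff_Atilde]
  refine Finset.sum_eq_zero fun j hj => mul_eq_zero_of_right _ <|
    Finset.sum_eq_zero fun t _ => mul_eq_zero_of_right _ <|
    Finset.sum_eq_zero fun β _ => mul_eq_zero_of_right _ <|
    Finset.sum_eq_zero fun α _ => mul_eq_zero_of_right _ <|
    Finset.sum_eq_zero fun i hi => if_neg ?_
  have := Finset.mem_Icc.mp hj
  have := Finset.mem_range.mp hi
  omega

theorem stmt18_general {n p : ℕ} :
    (∀ m : ℕ, m ≤ 2*p - 2 → ∃ P : Polynomial ℚ, P.natDegree ≤ p ∧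
        ∀ ℓ : ℕ, ℓ ≤ n →
          ((PowerSeries.coeff m (Atilde n p ℓ) : ℤ) : ℚ) = Polynomial.eval (ℓ : ℚ) P) ∧
      (∀ m : ℕ, 2*p - 2 < m → ∀ ℓ : ℕ, ℓ ≤ n →
        PowerSeries.coeff m (Atilde n p ℓ) = 0) := by
  refine ⟨fun m _ => ?_, fun m hm ℓ _ => coeff_Atilde_eq_zero hm ℓ⟩
  obtain ⟨P, hP, hcoeff⟩ := agreesWithPolyOn_coeff_Atilde n p m
  exact ⟨P, hP, fun ℓ hℓ => hcoeff ℓ hℓ⟩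

/-- Remark 3.3: each coefficient of `Ã_p^{(ℓ)}(z)` is a polynomial
in `ℓ` of degree at most `p`, and `Ã_p^{(ℓ)}(z)` has degree at most `2p-2`. -/
theorem stmt18 {n p : ℕ} (hn : 2 ≤ n) (hp1 : 1 ≤ p) (hpn : p ≤ n) :
    (∀ m : ℕ, m ≤ 2*p - 2 → ∃ P : Polynomial ℚ, P.natDegree ≤ p ∧
        ∀ ℓ : ℕ, ℓ ≤ n →
          ((PowerSeries.coeff m (Atilde n p ℓ) : ℤ) : ℚ) = Polynomial.eval (ℓ : ℚ) P) ∧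
      (∀ m : ℕ, 2*p - 2 < m → ∀ ℓ : ℕ, ℓ ≤ n →
        PowerSeries.coeff m (Atilde n p ℓ) = 0) :=
  stmt18_general
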